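/- arXiv:2002.04466 — 2 statements merged into one kernel-verified Lean document; each statement's English description precedes it below -/
import Mathlib

section
/- In the algebra A = ⊕_{i∈ℕ} k z_i with product z_m z_n = Σ_{j=0}^{m} C(m+n-j, n) C(n, j) λ^j z_{m+n-j}, for each m ∈ ℕ₊ the submodule I_m = ⊕_{i ≥ m} k z_i is an ideal of A satisfying A·I_m ⊆ I_m and P(I_m) ⊆ I_m, where P(z_i) = z_{i+1}. Hence A/I_m with the induced operator is a Rota-Baxter algebra of weight λ. -/
/-!
The Rota-Baxter identity holds in `A` itself, not only modulo `I_m`. By bilinearity it suffices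
to check it on basis vectors, where the coefficient of `z_i` in `z_p z_q` is
`C(i, q) C(q, p + q - i) λ^(p + q - i)` for `i ≤ p + q`. Comparing coefficients of `z_(D+1)` in
`z_(p+1) z_(q+1) = P(z_(p+1) z_q) + P(z_p z_(q+1)) + λ P(z_p z_q)` with `j = p + q - D` gives
`C(D+1, q+1) C(q+1, j+1) = C(D, q) C(q, j+1) + C(D, q+1) C(q+1, j+1) + C(D, q) C(q, j)`,
which is Pascal's rule applied to both factors on the left. The same coefficient formula shows
that `z_p z_q` only involves `z_i` with `i ≥ q`, so `I_m` is an ideal, and `P` raises indices.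
-/

open Finset

/-- The multiplication on A = ⊕ K z_i determined by
z_m z_n = Σ_{j=0}^{m} C(m+n-j, n) C(n, j) λ^j z_{m+n-j}, extended bilinearly. -/
noncomputable def zmul {K : Type*} [CommRing K] (lam : K) (u v : ℕ →₀ K) : ℕ →₀ K :=
  u.sum fun m a => v.sum fun n b =>
    ∑ j ∈ range (m + 1),
      ((m + n - j).choose n * n.choose j) • Finsupp.single (m + n - j) (a * b * lam ^ j)

/-- The shift operator P(z_i) = z_{i+1}. -/
noncomputable def shiftP {K : Type*} [CommRing K] (u : ℕ →₀ K) : ℕ →₀ K :=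
  Finsupp.mapDomain (· + 1) u

open Finsupp

section

variable {K : Type*} [CommRing K] (lam : K)

lemma zmul_zero_left (v : ℕ →₀ K) : zmul lam 0 v = 0 := by simp [zmul]

lemma zmul_zero_right (u : ℕ →₀ K) : zmul lam u 0 = 0 := by simp [zmul]

lemma zmul_add_left (u₁ u₂ v : ℕ →₀ K) :
    zmul lam (u₁ + u₂) v = zmul lam u₁ v + zmul lam u₂ v := by
  unfold zmul
  apply sum_add_index' <;> intros <;>
    simp [Finsupp.sum, add_mul, single_add, smul_add, sum_add_distrib]

lemma zmul_add_right (u v₁ v₂ : ℕ →₀ K) :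
    zmul lam u (v₁ + v₂) = zmul lam u v₁ + zmul lam u v₂ := by
  unfold zmul
  rw [← Finsupp.sum_add]
  refine Finsupp.sum_congr fun m _ => ?_
  apply sum_add_index' <;> intros <;>
    simp [mul_add, add_mul, single_add, smul_add, sum_add_distrib]

lemma zmul_single_single (p q : ℕ) (a b : K) :
    zmul lam (single p a) (single q b)
      = ∑ j ∈ range (p + 1),
          ((p + q - j).choose q * q.choose j) • single (p + q - j) (a * b * lam ^ j) := by
  unfold zmul
  rw [sum_single_index, sum_single_index] <;> simp

lemma zmul_single_single_apply (p q i : ℕ) (a b : K) :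
    zmul lam (single p a) (single q b) i
      = if i ≤ p + q then
          ((i.choose q * q.choose (p + q - i) : ℕ) : K) * (a * b * lam ^ (p + q - i))
        else 0 := by
  rw [zmul_single_single, finsetSum_apply]
  simp only [Finsupp.smul_apply, single_apply, nsmul_eq_mul]
  split_ifs with hi
  · rw [Finset.sum_eq_single (p + q - i)]
    · rw [if_pos (by omega), Nat.sub_sub_self hi]
    · intro j hj hji
      rw [mem_range] at hj
      rw [if_neg (by omega), mul_zero]
    · intro hj
      have hiq : i < q := by simp only [mem_range] at hj; omega
      simp [Nat.sub_sub_self hi, Nat.choose_eq_zero_of_lt hiq]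
  · exact sum_eq_zero fun j _ => by rw [if_neg (by omega), mul_zero]

lemma shiftP_apply_zero (u : ℕ →₀ K) : shiftP u 0 = 0 :=
  mapDomain_of_notMem_range _ _ (by simp)

lemma shiftP_apply_succ (u : ℕ →₀ K) (i : ℕ) : shiftP u (i + 1) = u i :=
  mapDomain_apply (add_left_injective 1) u i

lemma shiftP_add (u v : ℕ →₀ K) : shiftP (u + v) = shiftP u + shiftP v :=
  mapDomain_add

lemma shiftP_single (p : ℕ) (a : K) : shiftP (single p a) = single (p + 1) a :=
  mapDomain_single

lemma zmul_eq_sum_zmul_single_single (u v : ℕ →₀ K) :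
    zmul lam u v = u.sum fun p a => v.sum fun q b => zmul lam (single p a) (single q b) := by
  simp only [zmul_single_single]
  rfl

lemma zmul_apply_eq_zero_of_lt {u v : ℕ →₀ K} {i : ℕ} (hv : ∀ n ∈ v.support, i < n) :
    zmul lam u v i = 0 := by
  rw [zmul_eq_sum_zmul_single_single, Finsupp.sum_apply]
  refine sum_eq_zero fun p _ => ?_
  dsimp only
  rw [Finsupp.sum_apply]
  refine sum_eq_zero fun q hq => ?_
  simp [zmul_single_single_apply, Nat.choose_eq_zero_of_lt (hv q hq)]

lemma zmul_shiftP_single_shiftP_single (p q : ℕ) (a b : K) :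
    zmul lam (single (p + 1) a) (single (q + 1) b)
      = shiftP (zmul lam (single (p + 1) a) (single q b))
        + shiftP (zmul lam (single p a) (single (q + 1) b))
        + lam • shiftP (zmul lam (single p a) (single q b)) := by
  ext (_ | D)
  · simp [zmul_single_single_apply, shiftP_apply_zero]
  simp only [Finsupp.add_apply, Finsupp.smul_apply, smul_eq_mul, shiftP_apply_succ,
    zmul_single_single_apply]
  rcases lt_trichotomy D (p + q + 1) with hD | rfl | hD
  · obtain ⟨j, hj⟩ : ∃ j, p + q - D = j := ⟨_, rfl⟩
    rw [if_pos (by omega), if_pos (by omega), if_pos (by omega), if_pos (by omega),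
      show p + 1 + (q + 1) - (D + 1) = j + 1 by omega, show p + 1 + q - D = j + 1 by omega,
      show p + (q + 1) - D = j + 1 by omega, hj, Nat.choose_succ_succ' D q,
      Nat.choose_succ_succ' q j]
    push_cast
    ring
  · rw [if_pos (by omega), if_pos (by omega), if_pos (by omega), if_neg (by omega),
      show p + 1 + (q + 1) - (p + q + 1 + 1) = 0 by omega, show p + 1 + q - (p + q + 1) = 0 by omega,
      show p + (q + 1) - (p + q + 1) = 0 by omega, Nat.choose_succ_succ' (p + q + 1) q,
      Nat.choose_zero_right, Nat.choose_zero_right]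
    push_cast
    ring
  · rw [if_neg (by omega), if_neg (by omega), if_neg (by omega), if_neg (by omega)]
    simp

lemma zmul_shiftP_single_shiftP (p : ℕ) (a : K) (v : ℕ →₀ K) :
    zmul lam (single (p + 1) a) (shiftP v)
      = shiftP (zmul lam (single (p + 1) a) v)
        + shiftP (zmul lam (single p a) (shiftP v))
        + lam • shiftP (zmul lam (single p a) v) := by
  induction v using Finsupp.induction with
  | zero => simp [shiftP, zmul_zero_right]
  | single_add q b v _ _ ih =>
    simp only [shiftP_add, zmul_add_right, shiftP_single, smul_add]
    rw [zmul_shiftP_single_shiftP_single, ih]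
    abel

lemma zmul_shiftP_shiftP (u v : ℕ →₀ K) :
    zmul lam (shiftP u) (shiftP v)
      = shiftP (zmul lam (shiftP u) v) + shiftP (zmul lam u (shiftP v))
        + lam • shiftP (zmul lam u v) := by
  induction u using Finsupp.induction with
  | zero => simp [shiftP, zmul_zero_left]
  | single_add p a u _ _ ih =>
    simp only [shiftP_add, zmul_add_left, shiftP_single, smul_add]
    rw [zmul_shiftP_single_shiftP, ih]
    abel

end

theorem stmt6_general {K : Type*} [CommRing K] (lam : K) (m : ℕ) :
    (∀ u v : ℕ →₀ K, (∀ i, i < m → v i = 0) → ∀ i, i < m → zmul lam u v i = 0) ∧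
    (∀ v : ℕ →₀ K, (∀ i, i < m → v i = 0) → ∀ i, i < m → shiftP v i = 0) ∧
    (∀ u v : ℕ →₀ K, ∀ i, i < m →
      zmul lam (shiftP u) (shiftP v) i
        = (shiftP (zmul lam (shiftP u) v) + shiftP (zmul lam u (shiftP v))
            + lam • shiftP (zmul lam u v)) i) := by
  refine ⟨fun u v hv i hi => zmul_apply_eq_zero_of_lt lam fun n hn => ?_, fun v hv i hi => ?_,
    fun u v i _ => by rw [zmul_shiftP_shiftP]⟩
  · exact hi.trans_le (not_lt.mp fun hnm => mem_support_iff.mp hn (hv n hnm))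
  · rcases i with _ | i
    · exact shiftP_apply_zero v
    · rw [shiftP_apply_succ]
      exact hv i (by omega)

/-- I_m = ⊕_{i ≥ m} K z_i (described by: all coefficients below m vanish) is an ideal
of A closed under P; hence the Rota-Baxter identity of weight λ holds modulo I_m. -/
theorem stmt6 {K : Type*} [CommRing K] (lam : K) (m : ℕ) (hm : 1 ≤ m) :
    (∀ u v : ℕ →₀ K, (∀ i, i < m → v i = 0) → ∀ i, i < m → zmul lam u v i = 0) ∧
    (∀ v : ℕ →₀ K, (∀ i, i < m → v i = 0) → ∀ i, i < m → shiftP v i = 0) ∧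
    (∀ u v : ℕ →₀ K, ∀ i, i < m →
      zmul lam (shiftP u) (shiftP v) i
        = (shiftP (zmul lam (shiftP u) v) + shiftP (zmul lam u (shiftP v))
            + lam • shiftP (zmul lam u v)) i) :=
  stmt6_general lam m
end

section
/- Let k be an integral domain of characteristic 0 with a nonzero element λ, and b_0 ∈ k. Let A = ⊕ k z_i with product z_m z_n = Σ_{j=0}^{m} C(m+n-j,n)C(n,j)λ^j z_{m+n-j}, and (R, P) = (A/I_2, P̄) where I_2 = ⊕_{i≥2} k z_i and P̄(z̄_0) = z̄_1, P̄(z̄_1) = 0. Define P̃ on R^ℕ recursively by P̃(f)_0 = P̄(f_0) and P̃(f)_{n+1} = b_0 P̃(f)_n + P̃(∂f)_n. If P̃ is a Rota-Baxter operator of weight λ on the λ-Hurwitz series algebra R^ℕ, then b_0 = 0. -/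
/-! Evaluate the Rota-Baxter identity at component 1 on `f = (0, 1, 0, …)` and the identity
`g = (1, 0, 0, …)`. Using `P̄ 1 = x̄`, `P̄ x̄ = 0` and `x̄² = λ x̄`, everything cancels except
`λ² b₀ x̄ = 0`; since `x̄ ↦ λ` defines a `K`-algebra map `R → K`, this forces `λ³ b₀ = 0`. -/

open Finset

/-- The λ-Hurwitz product on sequences. -/
def hmul {K R : Type*} [CommRing K] [CommRing R] [Algebra K R] (lam : K) (f g : ℕ → R) :
    ℕ → R :=
  fun n => ∑ i ∈ range (n + 1), ∑ j ∈ range (n - i + 1),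
    (n.choose i * (n - i).choose j) • (lam ^ i • (f (n - j) * g (i + j)))

/-- The shift operator ∂(f)_n = f_{n+1}. -/
def der {R : Type*} (f : ℕ → R) : ℕ → R := fun n => f (n + 1)

/-- The cover of P determined by P̃(f)_0 = P(f_0) and P̃(f)_{n+1} = b_0 P̃(f)_n + P̃(∂f)_n. -/
def cov17 {K R : Type*} [CommRing K] [CommRing R] [Algebra K R]
    (P : R → R) (b0 : K) : ℕ → (ℕ → R) → R
  | 0, f => P (f 0)
  | n + 1, f => b0 • cov17 P b0 n f + cov17 P b0 n (der f)

open Polynomial AdjoinRoot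

section Hurwitz

variable {K R : Type*} [CommRing K] [CommRing R] [Algebra K R]

def IsRotaBaxter (lam : K) (Q : (ℕ → R) → ℕ → R) : Prop :=
  ∀ f g, hmul lam (Q f) (Q g) =
    Q (hmul lam (Q f) g) + Q (hmul lam f (Q g)) + lam • Q (hmul lam f g)

@[simp]
lemma hmul_apply_zero (lam : K) (f g : ℕ → R) : hmul lam f g 0 = f 0 * g 0 := by
  simp [hmul]

@[simp]
lemma hmul_apply_one (lam : K) (f g : ℕ → R) :
    hmul lam f g 1 = f 1 * g 0 + f 0 * g 1 + lam • (f 1 * g 1) := by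
  simp [hmul, sum_range_succ]

@[simp]
lemma cov17_zero (P : R → R) (b0 : K) (f : ℕ → R) : cov17 P b0 0 f = P (f 0) := rfl

@[simp]
lemma cov17_one (P : R → R) (b0 : K) (f : ℕ → R) :
    cov17 P b0 1 f = b0 • P (f 0) + P (f 1) := rfl

lemma smul_eq_zero_of_isRotaBaxter_cov17 {lam b0 : K} {r : R} (hr : r * r = lam • r)
    {P : R →ₗ[K] R} (hP1 : P 1 = r) (hPr : P r = 0)
    (hRB : IsRotaBaxter lam fun f n => cov17 P b0 n f) :
    (lam ^ 2 * b0) • r = 0 := by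
  have h := congrFun (hRB (Pi.single 1 1) (Pi.single 0 1)) 1
  simp only [Pi.add_apply, Pi.smul_apply, cov17_zero, cov17_one, hmul_apply_zero,
    hmul_apply_one, Pi.single_apply] at h
  simp only [one_ne_zero, zero_ne_one, if_true, if_false, mul_zero, zero_mul, mul_one, one_mul,
    smul_zero, add_zero, zero_add, map_zero, map_add, map_smul, hP1, hPr, mul_smul_comm, hr,
    smul_smul] at h
  rw [add_eq_left] at h
  rwa [show lam ^ 2 * b0 = lam * (b0 * lam) by ring]

end Hurwitz

section AdjoinRoot

variable {K : Type*} [CommRing K]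

lemma root_mul_root_sub_C_mul_X (lam : K) :
    root (X ^ 2 - C lam * X) * root (X ^ 2 - C lam * X) = lam • root (X ^ 2 - C lam * X) := by
  have h := eval₂_root (X ^ 2 - C lam * X)
  rw [eval₂_sub, eval₂_mul, eval₂_pow, eval₂_X, eval₂_C, sub_eq_zero] at h
  rw [← pow_two, h, Algebra.smul_def]
  rfl

lemma eq_zero_of_smul_root_sub_C_mul_X [NoZeroDivisors K] {lam : K} (hlam : lam ≠ 0) {c : K}
    (h : c • root (X ^ 2 - C lam * X) = 0) : c = 0 := by
  have hev : aeval lam (X ^ 2 - C lam * X) = 0 := by simp [pow_two]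
  have h' := congrArg (liftAlgHom _ (Algebra.ofId K K) lam hev) h
  rw [map_smul, map_zero, liftAlgHom_root _ _ _ hev, smul_eq_mul] at h'
  exact (mul_eq_zero.mp h').resolve_right hlam

end AdjoinRoot

theorem stmt17_general {K : Type*} [CommRing K] [IsDomain K]
    (lam : K) (hlam : lam ≠ 0) (b0 : K)
    (Pb : AdjoinRoot (Polynomial.X ^ 2 - Polynomial.C lam * Polynomial.X)
      →ₗ[K] AdjoinRoot (Polynomial.X ^ 2 - Polynomial.C lam * Polynomial.X))
    (hPb0 : Pb 1 = AdjoinRoot.root (Polynomial.X ^ 2 - Polynomial.C lam * Polynomial.X))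
    (hPb1 : Pb (AdjoinRoot.root (Polynomial.X ^ 2 - Polynomial.C lam * Polynomial.X)) = 0)
    (hRB : ∀ f g : ℕ → AdjoinRoot (Polynomial.X ^ 2 - Polynomial.C lam * Polynomial.X),
      hmul lam (fun n => cov17 (K := K) Pb b0 n f) (fun n => cov17 (K := K) Pb b0 n g)
        = (fun n => cov17 (K := K) Pb b0 n
            (hmul lam (fun m => cov17 (K := K) Pb b0 m f) g))
          + (fun n => cov17 (K := K) Pb b0 n
              (hmul lam f (fun m => cov17 (K := K) Pb b0 m g)))
          + lam • (fun n => cov17 (K := K) Pb b0 n (hmul lam f g))) :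
    b0 = 0 := by
  have h := smul_eq_zero_of_isRotaBaxter_cov17 (root_mul_root_sub_C_mul_X lam) hPb0 hPb1 hRB
  exact (mul_eq_zero.mp (eq_zero_of_smul_root_sub_C_mul_X hlam h)).resolve_left
    (pow_ne_zero 2 hlam)

/-- Let K be a domain of characteristic 0 with λ ≠ 0, and let R = A/I₂ be the
quotient of the free Rota-Baxter algebra on K, i.e. R = K[x]/(x² - λx) with
z̄₀ = 1, z̄₁ = x̄, and Rota-Baxter operator P̄(z̄₀) = z̄₁, P̄(z̄₁) = 0. If the cover
P̃ with recursion P̃(f)_{n+1} = b₀ P̃(f)_n + P̃(∂f)_n is a Rota-Baxter operator of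
weight λ on the λ-Hurwitz series algebra R^ℕ, then b₀ = 0. -/
theorem stmt17 {K : Type*} [CommRing K] [IsDomain K] [CharZero K]
    (lam : K) (hlam : lam ≠ 0) (b0 : K)
    (Pb : AdjoinRoot (Polynomial.X ^ 2 - Polynomial.C lam * Polynomial.X)
      →ₗ[K] AdjoinRoot (Polynomial.X ^ 2 - Polynomial.C lam * Polynomial.X))
    (hPb0 : Pb 1 = AdjoinRoot.root (Polynomial.X ^ 2 - Polynomial.C lam * Polynomial.X))
    (hPb1 : Pb (AdjoinRoot.root (Polynomial.X ^ 2 - Polynomial.C lam * Polynomial.X)) = 0)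
    (hRB : ∀ f g : ℕ → AdjoinRoot (Polynomial.X ^ 2 - Polynomial.C lam * Polynomial.X),
      hmul lam (fun n => cov17 (K := K) Pb b0 n f) (fun n => cov17 (K := K) Pb b0 n g)
        = (fun n => cov17 (K := K) Pb b0 n
            (hmul lam (fun m => cov17 (K := K) Pb b0 m f) g))
          + (fun n => cov17 (K := K) Pb b0 n
              (hmul lam f (fun m => cov17 (K := K) Pb b0 m g)))
          + lam • (fun n => cov17 (K := K) Pb b0 n (hmul lam f g))) :
    b0 = 0 :=
  stmt17_general lam hlam b0 Pb hPb0 hPb1 hRB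
end
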